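/- For every n with 2 ≤ n ≤ N+1 and every j with 1 ≤ j ≤ n, the multiplier θ_{n,j} defined by the recursion θ_{n,n} = 1 and θ_{n,j} = Σ_{k=1}^{n−j} τ_{n−k}^α θ_{n−k,j} (T̂_{n,n−k} − T̂_{n,n−k−1}) is strictly positive. -/

import Mathlib

/-- Graded temporal mesh `t_n = T ((n-1)/N)^r`. -/
noncomputable def tmesh (T r : ℝ) (N n : ℕ) : ℝ := T * (((n : ℝ) - 1) / (N : ℝ)) ^ r

/-- Step sizes `τ_n = t_{n+1} - t_n`. -/
noncomputable def tau (T r : ℝ) (N n : ℕ) : ℝ := tmesh T r N (n + 1) - tmesh T r N n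

/-- L1 coefficients `T̂_{n,j}` (with the convention `T̂_{n,0} = 0`). -/
noncomputable def That (α T r : ℝ) (N n j : ℕ) : ℝ :=
  if j = 0 then 0 else
    ((tmesh T r N n - tmesh T r N j) ^ (1 - α) -
        (tmesh T r N n - tmesh T r N (j + 1)) ^ (1 - α)) /
      (tau T r N j * Real.Gamma (2 - α))

/-- The multipliers `θ_{n,j}`: `θ_{n,n} = 1` and
`θ_{n,j} = Σ_{k=1}^{n-j} τ_{n-k}^α θ_{n-k,j} (T̂_{n,n-k} - T̂_{n,n-k-1})`. -/
noncomputable def theta (α T r : ℝ) (N : ℕ) : ℕ → ℕ → ℝ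
  | n, j =>
    if n = j then 1
    else
      ∑ k ∈ (Finset.Icc 1 (n - j)).attach,
        tau T r N (n - k.1) ^ α * theta α T r N (n - k.1) j *
          (That α T r N n (n - k.1) - That α T r N n (n - k.1 - 1))
  termination_by n j => n
  decreasing_by
    have hk := Finset.mem_Icc.mp k.2
    omega

/-!
The mesh is strictly increasing, so every step `τ_m` is positive. Strict concavity of
`x ↦ x ^ (1 - α)` makes its difference quotients decrease, which says that `T̂_{n,j}` is positive
and strictly increasing in `j`; with `T̂_{n,0} = 0` every difference `T̂_{n,m} - T̂_{n,m-1}` in the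
recursion is positive, and strong induction on `n` shows that every summand is positive.
-/

open Set

section Mesh

variable {α T r : ℝ} {N : ℕ}

theorem tmesh_strictMonoOn (hT : 0 < T) (hr : 0 < r) (hN : 0 < N) :
    StrictMonoOn (tmesh T r N) (Ici 1) := by
  intro m hm n _ hmn
  have hm : (1 : ℝ) ≤ m := by exact_mod_cast hm
  have hmn : (m : ℝ) < n := by exact_mod_cast hmn
  unfold tmesh
  gcongr

theorem tau_pos (hT : 0 < T) (hr : 0 < r) (hN : 0 < N) {m : ℕ} (hm : 1 ≤ m) :
    0 < tau T r N m :=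
  sub_pos.mpr <| tmesh_strictMonoOn hT hr hN hm (mem_Ici.mpr (by omega)) (Nat.lt_succ_self m)

theorem That_pos (hα : α ∈ Ioo 0 1) (hT : 0 < T) (hr : 0 < r) (hN : 0 < N) {n j : ℕ}
    (hj : 1 ≤ j) (hjn : j < n) : 0 < That α T r N n j := by
  obtain ⟨hα0, hα1⟩ := hα
  have hmono := tmesh_strictMonoOn hT hr hN
  have hstep : tmesh T r N j < tmesh T r N (j + 1) :=
    hmono hj (mem_Ici.mpr (by omega)) (Nat.lt_succ_self j)
  have hlast : tmesh T r N (j + 1) ≤ tmesh T r N n :=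
    hmono.monotoneOn (mem_Ici.mpr (by omega)) (mem_Ici.mpr (by omega)) hjn
  rw [That, if_neg (by omega)]
  refine div_pos (sub_pos.mpr ?_) (mul_pos (tau_pos hT hr hN hj) (Real.Gamma_pos_of_pos ?_))
  · exact Real.rpow_lt_rpow (by linarith) (by linarith) (by linarith)
  · linarith

theorem That_lt_That_succ (hα : α ∈ Ioo 0 1) (hT : 0 < T) (hr : 0 < r) (hN : 0 < N) {n j : ℕ}
    (hj : 1 ≤ j) (hjn : j + 2 ≤ n) : That α T r N n j < That α T r N n (j + 1) := by
  obtain ⟨hα0, hα1⟩ := hα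
  have hmono := tmesh_strictMonoOn hT hr hN
  set a := tmesh T r N n - tmesh T r N j
  set b := tmesh T r N n - tmesh T r N (j + 1)
  set c := tmesh T r N n - tmesh T r N (j + 2)
  have hc : 0 ≤ c := sub_nonneg.mpr <| hmono.monotoneOn (mem_Ici.mpr (by omega)) (mem_Ici.mpr (by omega)) hjn
  have hcb : c < b := sub_lt_sub_left (hmono (mem_Ici.mpr (by omega)) (mem_Ici.mpr (by omega)) (by omega)) _
  have hba : b < a := sub_lt_sub_left (hmono hj (mem_Ici.mpr (by omega)) (by omega)) _
  have hτj : tau T r N j = a - b := by simp only [a, b, tau]; ring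
  have hτj1 : tau T r N (j + 1) = b - c := by simp only [b, c, tau]; ring
  have hslope : (a ^ (1 - α) - b ^ (1 - α)) / (a - b) < (b ^ (1 - α) - c ^ (1 - α)) / (b - c) :=
    (Real.strictConcaveOn_rpow (by linarith) (by linarith)).slope_anti_adjacent
      hc (mem_Ici.mpr (by linarith)) hcb hba
  rw [That, That, if_neg (by omega), if_neg (by omega), hτj, hτj1, div_mul_eq_div_div,
    div_mul_eq_div_div]
  exact div_lt_div_of_pos_right hslope (Real.Gamma_pos_of_pos (by linarith))

theorem That_sub_That_pred_pos (hα : α ∈ Ioo 0 1) (hT : 0 < T) (hr : 0 < r) (hN : 0 < N)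
    {n m : ℕ} (hm : 1 ≤ m) (hmn : m < n) : 0 < That α T r N n m - That α T r N n (m - 1) := by
  obtain rfl | hm := hm.eq_or_lt
  · simpa [That] using That_pos hα hT hr hN le_rfl hmn
  · have h := That_lt_That_succ hα hT hr hN (n := n) (j := m - 1) (by omega) (by omega)
    rw [Nat.sub_add_cancel hm.le] at h
    linarith

theorem theta_pos_of_le (hα : α ∈ Ioo 0 1) (hT : 0 < T) (hr : 0 < r)
    (hN : 0 < N) {n j : ℕ} (hj : 1 ≤ j) (hjn : j ≤ n) : 0 < theta α T r N n j := by
  induction n using Nat.strong_induction_on with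
  | _ n ih =>
    obtain rfl | hjn := hjn.eq_or_lt
    · rw [theta, if_pos rfl]
      exact one_pos
    rw [theta, if_neg hjn.ne']
    refine Finset.sum_pos (fun k _ => ?_) (by simp; omega)
    have hk := Finset.mem_Icc.mp k.2
    refine mul_pos (mul_pos ?_ (ih _ (by omega) (by omega))) ?_
    · exact Real.rpow_pos_of_pos (tau_pos hT hr hN (by omega)) α
    · exact That_sub_That_pred_pos hα hT hr hN (by omega) (by omega)

end Mesh

/-- the multipliers `θ_{n,j}` are strictly positive for
`2 ≤ n ≤ N+1` and `1 ≤ j ≤ n`. -/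
theorem theta_pos (α T r : ℝ) (hα : α ∈ Set.Ioo (0 : ℝ) 1) (hT : 0 < T)
    (hr : 1 ≤ r) (N : ℕ) (hN : 0 < N) :
    ∀ n, 2 ≤ n → n ≤ N + 1 → ∀ j, 1 ≤ j → j ≤ n → 0 < theta α T r N n j :=
  fun _ _ _ _ hj hjn => theta_pos_of_le hα hT (by linarith) hN hj hjn
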